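/- There does not exist a strictly Deza graph with parameters (n, k, k − 1, k − 2), for any n and k. -/

import Mathlib

open Finset SimpleGraph

universe u v

/-- The number of common neighbours of two vertices. -/
def commonNbrs {V : Type u} [Fintype V] [DecidableEq V] (G : SimpleGraph V)
    [DecidableRel G.Adj] (x y : V) : ℕ :=
  (G.neighborFinset x ∩ G.neighborFinset y).card

/-- `G` is a Deza graph with parameters `(n, k, b, a)`: a nonempty `k`-regular graph on `n`
vertices in which any two distinct vertices have either `b` or `a` common neighbours,
where `b ≥ a`. -/
def IsDezaGraph {V : Type u} [Fintype V] [DecidableEq V] (G : SimpleGraph V)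
    [DecidableRel G.Adj] (n k b a : ℕ) : Prop :=
  G ≠ ⊥ ∧ Fintype.card V = n ∧ G.IsRegularOfDegree k ∧ a ≤ b ∧
    ∀ x y : V, x ≠ y → commonNbrs G x y = b ∨ commonNbrs G x y = a

/-- `G` is a strictly Deza graph with parameters `(n, k, b, a)`: a Deza graph of
diameter 2 that is not strongly regular. -/
def IsStrictlyDezaGraph {V : Type u} [Fintype V] [DecidableEq V] (G : SimpleGraph V)
    [DecidableRel G.Adj] (n k b a : ℕ) : Prop :=
  IsDezaGraph G n k b a ∧ G.Connected ∧ (∀ x y : V, G.dist x y ≤ 2) ∧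
    (∃ x y : V, G.dist x y = 2) ∧ ¬ ∃ ℓ μ : ℕ, G.IsSRGWith n k ℓ μ

/-- `B(v)`: the set of vertices `u ≠ v` having exactly `b` common neighbours with `v`. -/
def dezaB {V : Type u} [Fintype V] [DecidableEq V] (G : SimpleGraph V)
    [DecidableRel G.Adj] (b : ℕ) (v : V) : Finset V :=
  univ.filter fun u => u ≠ v ∧ commonNbrs G u v = b

/-- `A(v)`: the set of vertices `u ≠ v` having exactly `a` common neighbours with `v`. -/
def dezaA {V : Type u} [Fintype V] [DecidableEq V] (G : SimpleGraph V)
    [DecidableRel G.Adj] (a : ℕ) (v : V) : Finset V :=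
  univ.filter fun u => u ≠ v ∧ commonNbrs G u v = a

/-- `B[v] = B(v) ∪ {v}`. -/
def dezaBc {V : Type u} [Fintype V] [DecidableEq V] (G : SimpleGraph V)
    [DecidableRel G.Adj] (b : ℕ) (v : V) : Finset V :=
  insert v (dezaB G b v)

/-- A vertex `v` is of type (A) if `B(v) ∩ N(v) = ∅`. -/
def IsTypeA {V : Type u} [Fintype V] [DecidableEq V] (G : SimpleGraph V)
    [DecidableRel G.Adj] (b : ℕ) (v : V) : Prop :=
  dezaB G b v ∩ G.neighborFinset v = ∅

/-- A vertex `v` is of type (B) if `B(v) ⊆ N(v)`. -/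
def IsTypeB {V : Type u} [Fintype V] [DecidableEq V] (G : SimpleGraph V)
    [DecidableRel G.Adj] (b : ℕ) (v : V) : Prop :=
  dezaB G b v ⊆ G.neighborFinset v

/-- A vertex `v` is of type (C) if `|B(v) ∩ N(v)| = 1`. -/
def IsTypeC {V : Type u} [Fintype V] [DecidableEq V] (G : SimpleGraph V)
    [DecidableRel G.Adj] (b : ℕ) (v : V) : Prop :=
  (dezaB G b v ∩ G.neighborFinset v).card = 1

/-- A vertex `x` of type (A) is of type (A1) if there exists `y ∈ N(x)` with
`N(x) \ N(xᵢ) = {y}` for every `xᵢ ∈ B(x)`. -/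
def IsTypeA1 {V : Type u} [Fintype V] [DecidableEq V] (G : SimpleGraph V)
    [DecidableRel G.Adj] (b : ℕ) (x : V) : Prop :=
  IsTypeA G b x ∧ ∃ y ∈ G.neighborFinset x,
    ∀ xi ∈ dezaB G b x, G.neighborFinset x \ G.neighborFinset xi = {y}

/-- A vertex `x` of type (A) is of type (A2) if there exists `z ∉ N[x]` with
`N(xᵢ) \ N(x) = {z}` for every `xᵢ ∈ B(x)`. -/
def IsTypeA2 {V : Type u} [Fintype V] [DecidableEq V] (G : SimpleGraph V)
    [DecidableRel G.Adj] (b : ℕ) (x : V) : Prop :=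
  IsTypeA G b x ∧ ∃ z ∉ insert x (G.neighborFinset x),
    ∀ xi ∈ dezaB G b x, G.neighborFinset xi \ G.neighborFinset x = {z}

/-- The complete multipartite graph with `m` parts of size `t`. -/
def completeMultipartiteGr (m t : ℕ) : SimpleGraph (Fin m × Fin t) where
  Adj u v := u.1 ≠ v.1
  symm := ⟨fun _ _ h => Ne.symm h⟩
  loopless := ⟨fun _ h => h rfl⟩

/-- The 2-clique extension of a graph `H`: vertices `(u, i)` and `(v, j)` are adjacent
iff `u ~ v` in `H`, or `u = v` and `i ≠ j`. -/
def cliqueExt2 {W : Type v} (H : SimpleGraph W) : SimpleGraph (W × Fin 2) where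
  Adj u v := H.Adj u.1 v.1 ∨ (u.1 = v.1 ∧ u.2 ≠ v.2)
  symm := by
    constructor
    intro u v h
    rcases h with h | ⟨h1, h2⟩
    · exact Or.inl h.symm
    · exact Or.inr ⟨h1.symm, h2.symm⟩
  loopless := by
    constructor
    intro u h
    rcases h with h | ⟨_, h2⟩
    · exact H.irrefl h
    · exact h2 rfl

/-!
Write `k = a + 2` and `λ(x, y)` for the number of common neighbours. Counting the paths of length
two from a vertex `v` gives `∑_{u ≠ v} λ(v, u) = k (k - 1)`. The neighbours of `v` contribute
`a k + β(v)`, where `β(v) = |B(v) ∩ N(v)|`, so the `m = n - k - 1` non-neighbours of `v` contribute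
`a + 2 - β(v)`, each of them at least `max a 1` because the diameter is two.

If `m = 1`, the two vertices at distance two have the same neighbourhood, hence `k` common
neighbours. If `m ≥ 2` and `a ≠ 1`, the count forces `β = 0` and a constant `λ` on non-adjacent
pairs, so `G` is strongly regular. If `a = 1`, the neighbours of `v` contribute `2 e(N(v))`, so
`β(v)` is odd, and `β(v) ≤ 3 - m ≤ 1`: every vertex `v` has a unique neighbour `σ v` with
`N[v] = N[σ v]`. Then for a neighbour `w ≠ σ x` of `x`, both `σ x` and `σ w` are common neighbours
of `x` and `w`, contradicting `λ(x, w) = 1`.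
-/

namespace SimpleGraph

variable {V : Type u} [Fintype V] [DecidableEq V] {G : SimpleGraph V} [DecidableRel G.Adj]

lemma commonNbrs_comm (x y : V) : commonNbrs G x y = commonNbrs G y x := by
  rw [commonNbrs, commonNbrs, inter_comm]

lemma commonNbrs_self (v : V) : commonNbrs G v v = G.degree v := by
  rw [commonNbrs, inter_self, card_neighborFinset_eq_degree]

lemma card_commonNeighbors_eq_commonNbrs (x y : V) :
    Fintype.card (G.commonNeighbors x y) = commonNbrs G x y := by
  rw [commonNbrs, ← Set.toFinset_card]
  congr 1
  ext
  simp [mem_commonNeighbors]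

lemma sum_commonNbrs {k : ℕ} (hreg : G.IsRegularOfDegree k) (v : V) :
    ∑ u, commonNbrs G v u = k * k := by
  simp_rw [commonNbrs, ← filter_mem_eq_inter, card_filter]
  rw [sum_comm]
  simp only [mem_neighborFinset, G.adj_comm _ _, ← card_filter, ← neighborFinset_eq_filter,
    card_neighborFinset_eq_degree, hreg _, sum_const, smul_eq_mul]

lemma sum_eq_add_sum_neighborFinset_add_sum_compl {M : Type*} [AddCommMonoid M] (f : V → M)
    (v : V) : ∑ u, f u = f v + ∑ u ∈ G.neighborFinset v, f u + ∑ u ∈ Gᶜ.neighborFinset v, f u := by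
  rw [neighborFinset_compl, sdiff_singleton_eq_erase, add_right_comm, add_sum_erase _ _
    (mem_compl.2 (G.notMem_neighborFinset_self v)), add_comm, sum_add_sum_compl]

lemma even_sum_card_inter_neighborFinset (s : Finset V) :
    Even (∑ u ∈ s, #(s ∩ G.neighborFinset u)) := by
  have hdeg (u : (s : Set V)) : (G.induce s).degree u = #(s ∩ G.neighborFinset u) := by
    rw [← card_neighborFinset_eq_degree, ← card_map (.subtype (· ∈ (s : Set V)))]
    congr 1
    ext
    simp [and_comm]
  simp only [← sum_coe_sort s, ← hdeg, sum_degrees_eq_twice_card_edges, even_two_mul]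

lemma Adj.erase_neighborFinset_subset {x y : V} (hxy : G.Adj x y)
    (h : commonNbrs G x y + 1 = G.degree x) :
    (G.neighborFinset x).erase y ⊆ G.neighborFinset y := by
  have hsub : G.neighborFinset x ∩ G.neighborFinset y ⊆ (G.neighborFinset x).erase y :=
    fun u hu => mem_erase.2 ⟨(G.ne_of_adj ((mem_neighborFinset _ _ _).1 (mem_inter.1 hu).2)).symm,
      (mem_inter.1 hu).1⟩
  rw [← eq_of_subset_of_card_le hsub (by
    rw [card_erase_of_mem ((mem_neighborFinset _ _ _).2 hxy), card_neighborFinset_eq_degree, ← h,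
      commonNbrs]; rfl)]
  exact inter_subset_right

lemma Connected.commonNbrs_pos (hconn : G.Connected) {x y : V} (hd : G.dist x y ≤ 2)
    (hxy : Gᶜ.Adj x y) : 0 < commonNbrs G x y := by
  rw [compl_adj] at hxy
  have h2 : G.dist x y = 2 := by
    have := (hconn.dist_eq_zero_iff).not.2 hxy.1
    have := (dist_eq_one_iff_adj (G := G)).not.2 hxy.2
    omega
  obtain ⟨w, hw⟩ := (edist_eq_two_iff.1 (by rw [← (hconn x y).coe_dist_eq_edist, h2]; rfl)).2.2
  rw [mem_commonNeighbors] at hw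
  exact card_pos.2 ⟨w, by simpa using hw⟩

lemma neighborFinset_eq_of_compl_isRegularOfDegree_one (hc : Gᶜ.IsRegularOfDegree 1)
    {x y : V} (hxy : Gᶜ.Adj x y) : G.neighborFinset x = G.neighborFinset y := by
  have key {x y : V} (hxy : Gᶜ.Adj x y) (w : V) : G.Adj x w ↔ w ≠ x ∧ w ≠ y := by
    have hone : #(Gᶜ.neighborFinset x) ≤ 1 := by rw [card_neighborFinset_eq_degree, hc x]
    have hy : y ∈ Gᶜ.neighborFinset x := (mem_neighborFinset _ _ _).2 hxy
    have hsingle : Gᶜ.neighborFinset x = {y} :=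
      eq_singleton_iff_unique_mem.2 ⟨hy, fun z hz => card_le_one.1 hone z hz y hy⟩
    have hw : Gᶜ.Adj x w ↔ w = y := by rw [← mem_neighborFinset, hsingle, mem_singleton]
    rw [compl_adj] at hw
    by_cases hwx : w = x
    · simp [hwx]
    · tauto
  ext w
  rw [mem_neighborFinset, mem_neighborFinset, key hxy, key hxy.symm, and_comm]

end SimpleGraph

section

variable {V : Type u} [Fintype V] [DecidableEq V] {G : SimpleGraph V} [DecidableRel G.Adj] {a : ℕ}

lemma sum_commonNbrs_neighborFinset (hreg : G.IsRegularOfDegree (a + 2))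
    (hdeza : ∀ x y, x ≠ y → commonNbrs G x y = a + 1 ∨ commonNbrs G x y = a) (v : V) :
    ∑ u ∈ G.neighborFinset v, commonNbrs G v u =
      a * (a + 2) + #(dezaB G (a + 1) v ∩ G.neighborFinset v) := by
  have hterm : ∀ u ∈ G.neighborFinset v,
      commonNbrs G v u = a + if u ∈ dezaB G (a + 1) v then 1 else 0 := by
    intro u hu
    have hvu := G.ne_of_adj ((mem_neighborFinset _ _ _).1 hu)
    rcases hdeza v u hvu with h | h <;> simp [dezaB, commonNbrs_comm u v, h, hvu.symm]
  rw [sum_congr rfl hterm, sum_add_distrib, sum_const, card_neighborFinset_eq_degree, hreg v,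
    sum_boole, filter_mem_eq_inter, inter_comm, smul_eq_mul, mul_comm, Nat.cast_id]

lemma sum_commonNbrs_compl_neighborFinset_add_card (hreg : G.IsRegularOfDegree (a + 2))
    (hdeza : ∀ x y, x ≠ y → commonNbrs G x y = a + 1 ∨ commonNbrs G x y = a) (v : V) :
    ∑ u ∈ Gᶜ.neighborFinset v, commonNbrs G v u + #(dezaB G (a + 1) v ∩ G.neighborFinset v) =
      a + 2 := by
  have h := sum_commonNbrs hreg v
  rw [sum_eq_add_sum_neighborFinset_add_sum_compl (G := G) _ v, commonNbrs_self, hreg v,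
    sum_commonNbrs_neighborFinset hreg hdeza v] at h
  nlinarith

lemma isSRGWith_of_two_le_compl_degree {c : ℕ} (hreg : G.IsRegularOfDegree (a + 2))
    (hdeza : ∀ x y, x ≠ y → commonNbrs G x y = a + 1 ∨ commonNbrs G x y = a)
    (hc : ∀ x y, Gᶜ.Adj x y → c ≤ commonNbrs G x y) (hm : ∀ v, 2 ≤ Gᶜ.degree v)
    (hac : a + 2 ≤ 2 * c) : G.IsSRGWith (Fintype.card V) (a + 2) a c := by
  have key (v : V) : dezaB G (a + 1) v ∩ G.neighborFinset v = ∅ ∧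
      ∀ u ∈ Gᶜ.neighborFinset v, commonNbrs G v u = c := by
    have hsum := sum_commonNbrs_compl_neighborFinset_add_card hreg hdeza v
    have hle : ∑ _u ∈ Gᶜ.neighborFinset v, c ≤ ∑ u ∈ Gᶜ.neighborFinset v, commonNbrs G v u :=
      sum_le_sum fun u hu => hc v u ((mem_neighborFinset _ _ _).1 hu)
    have hconst : ∑ _u ∈ Gᶜ.neighborFinset v, c = Gᶜ.degree v * c := by
      rw [sum_const, card_neighborFinset_eq_degree, smul_eq_mul]
    have hmc := Nat.mul_le_mul_right c (hm v)
    refine ⟨card_eq_zero.1 (by omega), fun u hu => ?_⟩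
    exact ((sum_eq_sum_iff_of_le fun u hu => hc v u ((mem_neighborFinset _ _ _).1 hu)).1
      (by omega) u hu).symm
  refine ⟨rfl, hreg, fun x y hxy => ?_, fun x y hne hxy => ?_⟩
  · rw [card_commonNeighbors_eq_commonNbrs]
    refine (hdeza x y hxy.ne).resolve_left fun h => ?_
    have hy : y ∈ dezaB G (a + 1) x ∩ G.neighborFinset x := by
      simp [dezaB, commonNbrs_comm y x, h, hxy, hxy.ne.symm]
    simp [(key x).1] at hy
  · rw [card_commonNeighbors_eq_commonNbrs]
    exact (key x).2 y ((mem_neighborFinset _ _ _).2 ((G.compl_adj x y).2 ⟨hne, hxy⟩))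

lemma isTypeC_of_two_le_compl_degree (hreg : G.IsRegularOfDegree 3)
    (hdeza : ∀ x y, x ≠ y → commonNbrs G x y = 2 ∨ commonNbrs G x y = 1) {v : V}
    (hpos : ∀ u, Gᶜ.Adj v u → 0 < commonNbrs G v u) (hm : 2 ≤ Gᶜ.degree v) :
    IsTypeC G 2 v := by
  have hsum := sum_commonNbrs_compl_neighborFinset_add_card (a := 1) hreg hdeza v
  have hle : ∑ _u ∈ Gᶜ.neighborFinset v, 1 ≤ ∑ u ∈ Gᶜ.neighborFinset v, commonNbrs G v u :=
    sum_le_sum fun u hu => hpos u ((mem_neighborFinset _ _ _).1 hu)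
  rw [sum_const, card_neighborFinset_eq_degree, smul_eq_mul, mul_one] at hle
  have heven : Even (∑ u ∈ G.neighborFinset v, commonNbrs G v u) :=
    even_sum_card_inter_neighborFinset _
  rw [sum_commonNbrs_neighborFinset (a := 1) hreg hdeza v] at heven
  obtain ⟨r, hr⟩ := heven
  simp only [Nat.reduceAdd] at hsum hr
  unfold IsTypeC
  omega

lemma IsTypeC.existsUnique {b : ℕ} {v : V} (h : IsTypeC G b v) :
    ∃! u, G.Adj v u ∧ commonNbrs G v u = b := by
  obtain ⟨u, hu⟩ := card_eq_one.1 h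
  have hmem (w : V) : G.Adj v w ∧ commonNbrs G v w = b ↔ w = u := by
    have hw := Finset.ext_iff.1 hu w
    simp only [dezaB, mem_inter, mem_filter, mem_univ, true_and, mem_neighborFinset,
      commonNbrs_comm w v, mem_singleton] at hw
    rw [← hw]
    exact ⟨fun h => ⟨⟨(G.ne_of_adj h.1).symm, h.2⟩, h.1⟩, fun h => ⟨h.2, h.1.2⟩⟩
  exact ⟨u, (hmem u).2 rfl, fun w hw => (hmem w).1 hw⟩

lemma not_forall_isTypeC [Nonempty V] (hreg : G.IsRegularOfDegree 3)
    (hdeza : ∀ x y, x ≠ y → commonNbrs G x y = 2 ∨ commonNbrs G x y = 1) :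
    ¬ ∀ v, IsTypeC G 2 v := by
  intro hC
  choose σ hσ hσuniq using fun v => (hC v).existsUnique
  have hσσ (v : V) : σ (σ v) = v :=
    (hσuniq (σ v) v ⟨(hσ v).1.symm, by rw [commonNbrs_comm, (hσ v).2]⟩).symm
  have hσdeg (v : V) : commonNbrs G v (σ v) + 1 = G.degree v := by rw [(hσ v).2, hreg v]
  have hσadj {v w : V} (hvw : G.Adj v w) (hw : w ≠ σ v) : G.Adj (σ v) w :=
    (mem_neighborFinset _ _ _).1 <| Adj.erase_neighborFinset_subset (hσ v).1 (hσdeg v)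
      (mem_erase.2 ⟨hw, (mem_neighborFinset _ _ _).2 hvw⟩)
  obtain ⟨x⟩ := ‹Nonempty V›
  obtain ⟨w, hxw, hwσ⟩ : ∃ w, G.Adj x w ∧ w ≠ σ x := by
    have : 1 < #(G.neighborFinset x) := by rw [card_neighborFinset_eq_degree, hreg x]; omega
    obtain ⟨w, hw, hne⟩ := exists_mem_ne this (σ x)
    exact ⟨w, (mem_neighborFinset _ _ _).1 hw, hne⟩
  have hσw_ne_x : x ≠ σ w := fun h => hwσ (by rw [h, hσσ])
  have hσw_ne_σx : σ x ≠ σ w := fun h => (G.ne_of_adj hxw) (by rw [← hσσ x, h, hσσ])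
  have hsub : {σ x, σ w} ⊆ G.neighborFinset x ∩ G.neighborFinset w := by
    simp only [insert_subset_iff, singleton_subset_iff, mem_inter, mem_neighborFinset]
    exact ⟨⟨(hσ x).1, (hσadj hxw hwσ).symm⟩, (hσadj hxw.symm hσw_ne_x).symm, (hσ w).1⟩
  have htwo : 2 ≤ commonNbrs G x w := card_pair hσw_ne_σx ▸ card_le_card hsub
  have hxw_common : commonNbrs G x w = 2 := by
    rcases hdeza x w (G.ne_of_adj hxw) with h | h <;> omega
  exact hwσ (hσuniq x w ⟨hxw, hxw_common⟩)

end

theorem stmt3 {V : Type u} [Fintype V] [DecidableEq V] (G : SimpleGraph V)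
    [DecidableRel G.Adj] (n k b a : ℕ)
    (hb : (b : ℤ) = (k : ℤ) - 1) (ha : (a : ℤ) = (k : ℤ) - 2) :
    ¬ IsStrictlyDezaGraph G n k b a := by
  rintro ⟨⟨-, hcard, hreg, -, hdeza⟩, hconn, hdiam, ⟨x, y, hxy⟩, hnsrg⟩
  obtain ⟨rfl, rfl⟩ : k = a + 2 ∧ b = a + 1 := by omega
  have hpos {u w : V} (h : Gᶜ.Adj u w) : 0 < commonNbrs G u w :=
    hconn.commonNbrs_pos (hdiam u w) h
  have hcxy : Gᶜ.Adj x y := (G.compl_adj x y).2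
    ⟨by rintro rfl; simp at hxy, fun h => by simp [dist_eq_one_iff_adj.2 h] at hxy⟩
  have hc := hreg.compl
  obtain h0 | h1 | h2 : Fintype.card V - 1 - (a + 2) = 0 ∨ Fintype.card V - 1 - (a + 2) = 1 ∨
      2 ≤ Fintype.card V - 1 - (a + 2) := by omega
  · exact (Gᶜ.degree_pos_iff_exists_adj x).2 ⟨y, hcxy⟩ |>.ne' (h0 ▸ hc x)
  · have hxy_common : commonNbrs G x y = a + 2 := by
      rw [commonNbrs, neighborFinset_eq_of_compl_isRegularOfDegree_one (h1 ▸ hc) hcxy, inter_self,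
        card_neighborFinset_eq_degree, hreg y]
    rcases hdeza x y hcxy.ne with h | h <;> omega
  have hm (v : V) : 2 ≤ Gᶜ.degree v := hc v ▸ h2
  obtain rfl | rfl | ha : a = 0 ∨ a = 1 ∨ 2 ≤ a := by omega
  · exact hnsrg ⟨0, 1, hcard ▸
      isSRGWith_of_two_le_compl_degree hreg hdeza (fun _ _ h => hpos h) hm le_rfl⟩
  · have : Nonempty V := ⟨x⟩
    exact not_forall_isTypeC hreg hdeza fun v =>
      isTypeC_of_two_le_compl_degree hreg hdeza (fun _ h => hpos h) (hm v)
  · refine hnsrg ⟨a, a, hcard ▸ isSRGWith_of_two_le_compl_degree hreg hdeza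
      (fun x y h => ?_) hm (by omega)⟩
    rcases hdeza x y h.ne with h | h <;> omega
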